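/- Suppose for each x ∈ X there is a family of d_A × d_A matrices {A^{x,i,j}}_{i,j ≤ d} and for each y ∈ Y a family of d_B × d_B matrices {B^{y,i,j}}_{i,j ≤ d}, and define g(x,y) = trace(ρ(x,y)²) − (1/d_A)·trace(ρ_B(x,y)²) where ρ(x,y) = ∑_{i,j} A^{x,i,j} ⊗ B^{y,i,j} and ρ_B(x,y) = ∑_{i,j} trace(A^{x,i,j}) B^{y,i,j}. Then the matrix (g(x,y))_{x ∈ X, y ∈ Y} has rank at most d⁴. -/
import Mathlib


open Matrix Kronecker

/-- if `g(x,y) = tr(ρ(x,y)²) − (1/d_A)·tr(ρ_B(x,y)²)` where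
`ρ(x,y) = ∑ᵢⱼ A^{x,i,j} ⊗ B^{y,i,j}` and `ρ_B(x,y) = ∑ᵢⱼ tr(A^{x,i,j})·B^{y,i,j}`,
then the matrix `(g(x,y))` has rank at most `d⁴`. -/
theorem structure_function_rank_le {X Y : Type*} [Fintype X] [Fintype Y]
    [DecidableEq X] [DecidableEq Y] {d dA dB : ℕ}
    (A : X → Fin d → Fin d → Matrix (Fin dA) (Fin dA) ℂ)
    (B : Y → Fin d → Fin d → Matrix (Fin dB) (Fin dB) ℂ)
    (ρ : X → Y → Matrix (Fin dA × Fin dB) (Fin dA × Fin dB) ℂ)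
    (ρB : X → Y → Matrix (Fin dB) (Fin dB) ℂ)
    (hρ : ∀ x y, ρ x y = ∑ i, ∑ j, (A x i j) ⊗ₖ (B y i j))
    (hρB : ∀ x y, ρB x y = ∑ i, ∑ j, (A x i j).trace • B y i j)
    (G : Matrix X Y ℂ)
    (hG : ∀ x y, G x y = (ρ x y * ρ x y).trace - (dA : ℂ)⁻¹ * (ρB x y * ρB x y).trace) :
    G.rank ≤ d ^ 4 := by
  classical
  set M : Matrix X ((Fin d × Fin d) × (Fin d × Fin d)) ℂ := fun x p =>
    (A x p.1.1 p.1.2 * A x p.2.1 p.2.2).trace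
      - (dA : ℂ)⁻¹ * ((A x p.1.1 p.1.2).trace * (A x p.2.1 p.2.2).trace) with hM
  set N : Matrix ((Fin d × Fin d) × (Fin d × Fin d)) Y ℂ := fun p y =>
    (B y p.1.1 p.1.2 * B y p.2.1 p.2.2).trace with hN
  have hρ' : ∀ x y, ρ x y = ∑ p : Fin d × Fin d, (A x p.1 p.2) ⊗ₖ (B y p.1 p.2) := by
    intro x y; rw [hρ]; exact (Fintype.sum_prod_type fun p : Fin d × Fin d => (A x p.1 p.2) ⊗ₖ (B y p.1 p.2)).symm
  have hρB' : ∀ x y, ρB x y = ∑ p : Fin d × Fin d, (A x p.1 p.2).trace • B y p.1 p.2 := by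
    intro x y; rw [hρB]; exact (Fintype.sum_prod_type fun p : Fin d × Fin d => (A x p.1 p.2).trace • B y p.1 p.2).symm
  have hGMN : G = M * N := by
    ext x y
    rw [hG, Matrix.mul_apply]
    have h1 : (ρ x y * ρ x y).trace
        = ∑ p : Fin d × Fin d, ∑ q : Fin d × Fin d,
            (A x p.1 p.2 * A x q.1 q.2).trace * (B y p.1 p.2 * B y q.1 q.2).trace := by
      rw [hρ', Finset.sum_mul_sum]
      simp only [Matrix.trace_sum, ← Matrix.mul_kronecker_mul, Matrix.trace_kronecker]
    have h2 : (ρB x y * ρB x y).trace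
        = ∑ p : Fin d × Fin d, ∑ q : Fin d × Fin d,
            (A x p.1 p.2).trace * (A x q.1 q.2).trace
              * (B y p.1 p.2 * B y q.1 q.2).trace := by
      rw [hρB', Finset.sum_mul_sum]
      simp only [Matrix.trace_sum, Matrix.smul_mul, Matrix.mul_smul, Matrix.trace_smul,
        smul_smul, smul_eq_mul]
      exact Finset.sum_congr rfl fun p _ => Finset.sum_congr rfl fun q _ => by ring
    rw [h1, h2]
    simp only [Finset.mul_sum, ← Finset.sum_sub_distrib]
    conv_rhs => rw [Fintype.sum_prod_type]
    refine Finset.sum_congr rfl fun p _ => Finset.sum_congr rfl fun q _ => ?_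
    simp only [hM, hN]
    ring
  rw [hGMN]
  calc (M * N).rank ≤ N.rank := Matrix.rank_mul_le_right M N
    _ ≤ Fintype.card ((Fin d × Fin d) × (Fin d × Fin d)) := Matrix.rank_le_card_height N
    _ = d ^ 4 := by simp; ring
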